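/- For independent X₁ ~ N(μ₁, τ²), X₂ ~ N(μ₂, τ²), with μ_Q = μ₁1{X₁ ≥ X₂} + μ₂1{X₂ > X₁}, the expected selection bias E[max(X₁,X₂) − μ_Q] equals τ√2·φ((μ₁−μ₂)/(τ√2)), which is maximized over (μ₁, μ₂) when μ₁ = μ₂, with maximum value τ√2/√(2π) = τ/√π. -/

import Mathlib

open MeasureTheory ProbabilityTheory

/-- The standard normal density. -/
noncomputable def stdNormalPDF (x : ℝ) : ℝ := Real.exp (-x ^ 2 / 2) / Real.sqrt (2 * Real.pi)

open Filter Real Set Topology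
open scoped NNReal ENNReal

namespace SelBias


lemma hasDerivAt_gpdf (μ : ℝ) {v : ℝ≥0} (hv : v ≠ 0) (x : ℝ) :
    HasDerivAt (fun x => -(v : ℝ) * gaussianPDFReal μ v x)
      ((x - μ) * gaussianPDFReal μ v x) x := by
  have hv' : (0:ℝ) < v := by positivity
  have h1 : HasDerivAt (fun x : ℝ => -(x - μ) ^ 2 / (2 * v)) (-(x - μ) / v) x := by
    have h0 : HasDerivAt (fun x : ℝ => x - μ) 1 x := (hasDerivAt_id x).sub_const μ
    have h2 := ((h0.pow 2).neg).div_const (2 * (v:ℝ))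
    refine h2.congr_deriv ?_
    field_simp
    ring
  have h3 := ((h1.exp).const_mul ((Real.sqrt (2 * Real.pi * v))⁻¹)).const_mul (-(v:ℝ))
  have h4 : (fun y : ℝ => -(v:ℝ) * ((Real.sqrt (2 * Real.pi * v))⁻¹ * Real.exp (-(y - μ) ^ 2 / (2 * v))))
      = (fun y : ℝ => -(v:ℝ) * gaussianPDFReal μ v y) := by
    funext y; rw [gaussianPDFReal]
  rw [h4] at h3
  refine h3.congr_deriv ?_
  rw [gaussianPDFReal]
  field_simp

lemma tendsto_gpdf_atTop (μ : ℝ) {v : ℝ≥0} (hv : v ≠ 0) :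
    Tendsto (fun x => gaussianPDFReal μ v x) atTop (𝓝 0) := by
  have hv' : (0:ℝ) < v := by positivity
  have h1 : Tendsto (fun x : ℝ => -(x - μ) ^ 2 / (2 * v)) atTop atBot := by
    apply Tendsto.atBot_div_const (by positivity)
    apply tendsto_neg_atBot_iff.mpr
    exact (tendsto_pow_atTop (two_ne_zero)).comp (tendsto_atTop_add_const_right _ (-μ) tendsto_id)
  have := (Real.tendsto_exp_atBot.comp h1).const_mul ((Real.sqrt (2 * Real.pi * v))⁻¹)
  simpa [gaussianPDFReal_def, Function.comp] using this

lemma tendsto_gpdf_atBot (μ : ℝ) {v : ℝ≥0} (hv : v ≠ 0) :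
    Tendsto (fun x => gaussianPDFReal μ v x) atBot (𝓝 0) := by
  have hv' : (0:ℝ) < v := by positivity
  have h1 : Tendsto (fun x : ℝ => -(x - μ) ^ 2 / (2 * v)) atBot atBot := by
    apply Tendsto.atBot_div_const (by positivity)
    apply tendsto_neg_atBot_iff.mpr
    have h2 : Tendsto (fun x : ℝ => (μ - x)) atBot atTop := by
      have h0 : Tendsto (fun x : ℝ => -x) atBot atTop := tendsto_neg_atBot_atTop
      simpa [sub_eq_add_neg] using (tendsto_atTop_add_const_left atBot μ h0)
    have h3 := (tendsto_pow_atTop (two_ne_zero)).comp h2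
    have : (fun x : ℝ => (μ - x) ^ 2) = fun x : ℝ => (x - μ) ^ 2 := by ext x; ring
    rwa [← this]
  have := (Real.tendsto_exp_atBot.comp h1).const_mul ((Real.sqrt (2 * Real.pi * v))⁻¹)
  simpa [gaussianPDFReal_def, Function.comp] using this

lemma integrable_sub_mul_gpdf (μ : ℝ) {v : ℝ≥0} (hv : v ≠ 0) :
    Integrable (fun x => (x - μ) * gaussianPDFReal μ v x) := by
  have hv' : (0:ℝ) < v := by positivity
  have h0 : Integrable (fun x : ℝ => x * Real.exp (-(2 * (v:ℝ))⁻¹ * x ^ 2)) :=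
    integrable_mul_exp_neg_mul_sq (by positivity)
  have h1 := (h0.comp_sub_right μ).const_mul ((Real.sqrt (2 * Real.pi * v))⁻¹)
  refine h1.congr (Filter.Eventually.of_forall fun x => ?_)
  simp only [gaussianPDFReal]
  rw [show -(2 * (v:ℝ))⁻¹ * (x - μ) ^ 2 = -(x - μ) ^ 2 / (2 * v) by ring]
  ring

lemma integral_Ici_sub_mul_gpdf (μ : ℝ) {v : ℝ≥0} (hv : v ≠ 0) (a : ℝ) :
    ∫ x in Ici a, (x - μ) * gaussianPDFReal μ v x = v * gaussianPDFReal μ v a := by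
  rw [integral_Ici_eq_integral_Ioi]
  rw [integral_Ioi_of_hasDerivAt_of_tendsto' (fun x _ => hasDerivAt_gpdf μ hv x)
    ((integrable_sub_mul_gpdf μ hv).integrableOn)
    (by simpa using (tendsto_gpdf_atTop μ hv).const_mul (-(v:ℝ)))]
  ring

lemma integral_Iic_sub_mul_gpdf (μ : ℝ) {v : ℝ≥0} (hv : v ≠ 0) (a : ℝ) :
    ∫ x in Iic a, (x - μ) * gaussianPDFReal μ v x = -(v * gaussianPDFReal μ v a) := by
  rw [integral_Iic_of_hasDerivAt_of_tendsto' (fun x _ => hasDerivAt_gpdf μ hv x)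
    ((integrable_sub_mul_gpdf μ hv).integrableOn)
    (by simpa using (tendsto_gpdf_atBot μ hv).const_mul (-(v:ℝ)))]
  ring

lemma integral_Iio_sub_mul_gpdf (μ : ℝ) {v : ℝ≥0} (hv : v ≠ 0) (a : ℝ) :
    ∫ x in Iio a, (x - μ) * gaussianPDFReal μ v x = -(v * gaussianPDFReal μ v a) := by
  rw [← integral_Iic_eq_integral_Iio, integral_Iic_sub_mul_gpdf μ hv a]

lemma integral_sub_mul_gpdf (μ : ℝ) {v : ℝ≥0} (hv : v ≠ 0) :
    ∫ x, (x - μ) * gaussianPDFReal μ v x = 0 := by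
  rw [← intervalIntegral.integral_Iic_add_Ioi (b := μ) ((integrable_sub_mul_gpdf μ hv).integrableOn)
      ((integrable_sub_mul_gpdf μ hv).integrableOn),
    ← integral_Ici_eq_integral_Ioi, integral_Iic_sub_mul_gpdf μ hv,
    integral_Ici_sub_mul_gpdf μ hv]
  ring

lemma meas_step (a : ℝ) : Measurable (fun x : ℝ => if a ≤ x then (1:ℝ) else -1) :=
  Measurable.ite measurableSet_Ici measurable_const measurable_const

lemma integrable_step_mul (μ : ℝ) {v : ℝ≥0} (hv : v ≠ 0) (a : ℝ) :
    Integrable (fun x => (if a ≤ x then (1:ℝ) else -1) * ((x - μ) * gaussianPDFReal μ v x)) := by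
  refine (integrable_sub_mul_gpdf μ hv).bdd_mul (meas_step a).aestronglyMeasurable (c := 1) (Filter.Eventually.of_forall fun x => ?_)
  by_cases h : a ≤ x <;> simp [h]

lemma integral_step_up (μ : ℝ) {v : ℝ≥0} (hv : v ≠ 0) (a : ℝ) :
    ∫ x, (if a ≤ x then (1:ℝ) else -1) * ((x - μ) * gaussianPDFReal μ v x)
      = 2 * v * gaussianPDFReal μ v a := by
  rw [← intervalIntegral.integral_Iio_add_Ici (b := a) ((integrable_step_mul μ hv a).integrableOn)
      ((integrable_step_mul μ hv a).integrableOn)]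
  have h1 : ∫ x in Iio a, (if a ≤ x then (1:ℝ) else -1) * ((x - μ) * gaussianPDFReal μ v x)
      = ∫ x in Iio a, -((x - μ) * gaussianPDFReal μ v x) := by
    refine setIntegral_congr_fun measurableSet_Iio fun x hx => ?_
    rw [if_neg (not_le.mpr (mem_Iio.mp hx))]; ring
  have h2 : ∫ x in Ici a, (if a ≤ x then (1:ℝ) else -1) * ((x - μ) * gaussianPDFReal μ v x)
      = ∫ x in Ici a, (x - μ) * gaussianPDFReal μ v x := by
    refine setIntegral_congr_fun measurableSet_Ici fun x hx => ?_
    rw [if_pos (mem_Ici.mp hx)]; ring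
  rw [h1, h2, integral_neg, integral_Iio_sub_mul_gpdf μ hv, integral_Ici_sub_mul_gpdf μ hv]
  ring

lemma integral_step_down (μ : ℝ) {v : ℝ≥0} (hv : v ≠ 0) (a : ℝ) :
    ∫ x, (if x ≤ a then (1:ℝ) else -1) * ((x - μ) * gaussianPDFReal μ v x)
      = -(2 * v * gaussianPDFReal μ v a) := by
  have hib : Integrable (fun x => (if x ≤ a then (1:ℝ) else -1) * ((x - μ) * gaussianPDFReal μ v x)) := by
    refine (integrable_sub_mul_gpdf μ hv).bdd_mul
      (Measurable.ite measurableSet_Iic measurable_const measurable_const).aestronglyMeasurable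
      (c := 1) (Filter.Eventually.of_forall fun x => ?_)
    by_cases h : x ≤ a <;> simp [h]
  rw [← intervalIntegral.integral_Iic_add_Ioi (b := a) hib.integrableOn hib.integrableOn]
  have h1 : ∫ x in Iic a, (if x ≤ a then (1:ℝ) else -1) * ((x - μ) * gaussianPDFReal μ v x)
      = ∫ x in Iic a, (x - μ) * gaussianPDFReal μ v x := by
    refine setIntegral_congr_fun measurableSet_Iic fun x hx => ?_
    rw [if_pos (mem_Iic.mp hx)]; ring
  have h2 : ∫ x in Ioi a, (if x ≤ a then (1:ℝ) else -1) * ((x - μ) * gaussianPDFReal μ v x)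
      = ∫ x in Ioi a, -((x - μ) * gaussianPDFReal μ v x) := by
    refine setIntegral_congr_fun measurableSet_Ioi fun x hx => ?_
    rw [if_neg (not_le.mpr (mem_Ioi.mp hx))]; ring
  rw [h1, h2, integral_neg, ← integral_Ici_eq_integral_Ioi,
    integral_Iic_sub_mul_gpdf μ hv, integral_Ici_sub_mul_gpdf μ hv]
  ring

lemma integral_gaussianReal_eq (μ : ℝ) {v : ℝ≥0} (hv : v ≠ 0) (g : ℝ → ℝ) :
    ∫ x, g x ∂(gaussianReal μ v) = ∫ x, gaussianPDFReal μ v x * g x := by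
  rw [gaussianReal_of_var_ne_zero _ hv]
  have hm : Measurable fun x => (gaussianPDFReal μ v x).toNNReal :=
    (measurable_gaussianPDFReal μ v).real_toNNReal
  have hd : (gaussianPDF μ v) = fun x => ((gaussianPDFReal μ v x).toNNReal : ℝ≥0∞) := rfl
  rw [hd, integral_withDensity_eq_integral_smul hm g]
  congr 1
  funext x
  rw [NNReal.smul_def, Real.coe_toNNReal _ (gaussianPDFReal_nonneg μ v x), smul_eq_mul]

lemma integrable_gaussianReal_iff (μ : ℝ) {v : ℝ≥0} (hv : v ≠ 0) (g : ℝ → ℝ) :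
    Integrable g (gaussianReal μ v) ↔ Integrable (fun x => gaussianPDFReal μ v x * g x) := by
  rw [gaussianReal_of_var_ne_zero _ hv]
  have hm : Measurable fun x => (gaussianPDFReal μ v x).toNNReal :=
    (measurable_gaussianPDFReal μ v).real_toNNReal
  have hd : (gaussianPDF μ v) = fun x => ((gaussianPDFReal μ v x).toNNReal : ℝ≥0∞) := rfl
  rw [hd, integrable_withDensity_iff_integrable_smul hm]
  constructor <;> intro h <;> refine h.congr (Filter.Eventually.of_forall fun x => ?_) <;>
    simp only [NNReal.smul_def, smul_eq_mul, Real.coe_toNNReal _ (gaussianPDFReal_nonneg μ v x)]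

lemma integral_gpdf_mul_gpdf (μ₁ μ₂ : ℝ) {v : ℝ≥0} (hv : v ≠ 0) :
    ∫ x, gaussianPDFReal μ₁ v x * gaussianPDFReal μ₂ v x
      = (2 * Real.pi * v)⁻¹ * Real.sqrt (Real.pi * v) * Real.exp (-(μ₁ - μ₂)^2 / (4 * v)) := by
  have hv' : (0:ℝ) < v := by positivity
  have hsq : (Real.sqrt (2 * Real.pi * v))⁻¹ * (Real.sqrt (2 * Real.pi * v))⁻¹
      = (2 * Real.pi * v)⁻¹ := by
    rw [← mul_inv]
    congr 1
    exact Real.mul_self_sqrt (by positivity)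
  have key : ∀ x : ℝ, gaussianPDFReal μ₁ v x * gaussianPDFReal μ₂ v x
      = ((2 * Real.pi * v)⁻¹ * Real.exp (-(μ₁ - μ₂)^2 / (4 * v)))
        * Real.exp (-(v:ℝ)⁻¹ * (x - (μ₁ + μ₂) / 2) ^ 2) := by
    intro x
    have e1 : -(x - μ₁)^2 / (2 * (v:ℝ)) + -(x - μ₂)^2 / (2 * (v:ℝ))
        = -(μ₁ - μ₂)^2 / (4 * (v:ℝ)) + (-(v:ℝ)⁻¹ * (x - (μ₁ + μ₂) / 2) ^ 2) := by
      field_simp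
      ring
    simp only [gaussianPDFReal]
    rw [mul_mul_mul_comm, hsq, ← Real.exp_add, e1, Real.exp_add]
    ring
  simp_rw [key]
  rw [integral_const_mul]
  have hshift : ∫ x : ℝ, Real.exp (-(v:ℝ)⁻¹ * (x - (μ₁ + μ₂) / 2) ^ 2)
      = ∫ x : ℝ, Real.exp (-(v:ℝ)⁻¹ * x ^ 2) := by
    rw [show (fun x : ℝ => Real.exp (-(v:ℝ)⁻¹ * (x - (μ₁ + μ₂) / 2) ^ 2))
        = fun x : ℝ => (fun y : ℝ => Real.exp (-(v:ℝ)⁻¹ * y ^ 2)) (x + -((μ₁ + μ₂) / 2)) by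
      funext x; rw [← sub_eq_add_neg]]
    exact integral_add_right_eq_self (μ := volume) (fun y : ℝ => Real.exp (-(v:ℝ)⁻¹ * y ^ 2)) (-((μ₁ + μ₂) / 2))
  rw [hshift, integral_gaussian]
  rw [show Real.pi / (v:ℝ)⁻¹ = Real.pi * v by field_simp]
  ring

lemma integral_sub_gaussianReal (μ : ℝ) {v : ℝ≥0} (hv : v ≠ 0) :
    ∫ x, (x - μ) ∂(gaussianReal μ v) = 0 := by
  rw [integral_gaussianReal_eq μ hv]
  rw [show (fun x => gaussianPDFReal μ v x * (x - μ))
      = fun x => (x - μ) * gaussianPDFReal μ v x from funext fun x => mul_comm _ _]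
  exact integral_sub_mul_gpdf μ hv

lemma integrable_sub_gaussianReal (μ : ℝ) {v : ℝ≥0} (hv : v ≠ 0) :
    Integrable (fun x => x - μ) (gaussianReal μ v) := by
  rw [integrable_gaussianReal_iff μ hv]
  exact (integrable_sub_mul_gpdf μ hv).congr
    (Filter.Eventually.of_forall fun x => mul_comm _ _)

/-- Main computation over the product measure. -/
lemma integral_prod_gaussian (μ₁ μ₂ : ℝ) {v : ℝ≥0} (hv : v ≠ 0) :
    ∫ z : ℝ × ℝ, (max z.1 z.2 - (if z.2 ≤ z.1 then μ₁ else μ₂))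
        ∂((gaussianReal μ₁ v).prod (gaussianReal μ₂ v))
      = 2 * v * ((2 * Real.pi * v)⁻¹ * Real.sqrt (Real.pi * v)
          * Real.exp (-(μ₁ - μ₂)^2 / (4 * v))) := by
  set ν₁ := gaussianReal μ₁ v
  set ν₂ := gaussianReal μ₂ v
  set P : ℝ := (2 * Real.pi * v)⁻¹ * Real.sqrt (Real.pi * v)
      * Real.exp (-(μ₁ - μ₂)^2 / (4 * v)) with hP
  have hsmeas : Measurable (fun z : ℝ × ℝ => if z.2 ≤ z.1 then (1:ℝ) else -1) :=
    Measurable.ite (measurableSet_le measurable_snd measurable_fst)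
      measurable_const measurable_const
  have hsbd : ∀ z : ℝ × ℝ, ‖(if z.2 ≤ z.1 then (1:ℝ) else -1)‖ ≤ 1 := by
    intro z; by_cases h : z.2 ≤ z.1 <;> simp [h]
  have h1 : Integrable (fun z : ℝ × ℝ => z.1 - μ₁) (ν₁.prod ν₂) := by
    have := (integrable_sub_gaussianReal μ₁ hv).mul_prod
      (integrable_const (1:ℝ) (μ := ν₂))
    simpa using this
  have h2 : Integrable (fun z : ℝ × ℝ => z.2 - μ₂) (ν₁.prod ν₂) := by
    have := (integrable_const (1:ℝ) (μ := ν₁)).mul_prod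
      (integrable_sub_gaussianReal μ₂ hv)
    simpa using this
  have h3 : Integrable (fun z : ℝ × ℝ =>
      (if z.2 ≤ z.1 then (1:ℝ) else -1) * (z.1 - μ₁)) (ν₁.prod ν₂) :=
    h1.bdd_mul hsmeas.aestronglyMeasurable (c := 1) (Filter.Eventually.of_forall hsbd)
  have h4 : Integrable (fun z : ℝ × ℝ =>
      (if z.2 ≤ z.1 then (1:ℝ) else -1) * (z.2 - μ₂)) (ν₁.prod ν₂) :=
    h2.bdd_mul hsmeas.aestronglyMeasurable (c := 1) (Filter.Eventually.of_forall hsbd)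
  have hdecomp : ∀ z : ℝ × ℝ, (max z.1 z.2 - (if z.2 ≤ z.1 then μ₁ else μ₂))
      = ((z.1 - μ₁) + (z.2 - μ₂) + (if z.2 ≤ z.1 then (1:ℝ) else -1) * (z.1 - μ₁)
          - (if z.2 ≤ z.1 then (1:ℝ) else -1) * (z.2 - μ₂)) / 2 := by
    intro z
    by_cases h : z.2 ≤ z.1
    · simp only [if_pos h, max_eq_left h]; ring
    · simp only [if_neg h, max_eq_right (le_of_not_ge h)]; ring
  have hA : ∫ z : ℝ × ℝ, (z.1 - μ₁) ∂(ν₁.prod ν₂) = 0 := by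
    rw [integral_fun_fst (f := fun x => x - μ₁)]
    simp [integral_sub_gaussianReal μ₁ hv]
    exact integral_sub_gaussianReal μ₁ hv
  have hB : ∫ z : ℝ × ℝ, (z.2 - μ₂) ∂(ν₁.prod ν₂) = 0 := by
    rw [integral_fun_snd (f := fun y => y - μ₂)]
    simp [integral_sub_gaussianReal μ₂ hv]
    exact integral_sub_gaussianReal μ₂ hv
  have hC : ∫ z : ℝ × ℝ, (if z.2 ≤ z.1 then (1:ℝ) else -1) * (z.1 - μ₁) ∂(ν₁.prod ν₂)
      = 2 * v * P := by
    rw [integral_prod_symm _ h3]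
    have inner : ∀ y : ℝ, ∫ x, (if y ≤ x then (1:ℝ) else -1) * (x - μ₁) ∂ν₁
        = 2 * v * gaussianPDFReal μ₁ v y := by
      intro y
      rw [integral_gaussianReal_eq μ₁ hv, ← integral_step_up μ₁ hv y]
      congr 1; funext x; ring
    simp only [inner]
    rw [integral_gaussianReal_eq μ₂ hv, hP, ← integral_gpdf_mul_gpdf μ₁ μ₂ hv,
      ← integral_const_mul]
    congr 1; funext y; ring
  have hD : ∫ z : ℝ × ℝ, (if z.2 ≤ z.1 then (1:ℝ) else -1) * (z.2 - μ₂) ∂(ν₁.prod ν₂)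
      = -(2 * v * P) := by
    rw [integral_prod _ h4]
    have inner : ∀ x : ℝ, ∫ y, (if y ≤ x then (1:ℝ) else -1) * (y - μ₂) ∂ν₂
        = -(2 * v * gaussianPDFReal μ₂ v x) := by
      intro x
      rw [integral_gaussianReal_eq μ₂ hv, ← integral_step_down μ₂ hv x]
      congr 1; funext y; ring
    simp only [inner]
    rw [integral_neg, integral_gaussianReal_eq μ₁ hv, hP, ← integral_gpdf_mul_gpdf μ₁ μ₂ hv,
      ← integral_const_mul]
    congr 2; funext x; ring
  have h12 : Integrable (fun z : ℝ × ℝ => z.1 - μ₁ + (z.2 - μ₂)) (ν₁.prod ν₂) := h1.add h2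
  have h123 : Integrable (fun z : ℝ × ℝ => z.1 - μ₁ + (z.2 - μ₂)
      + (if z.2 ≤ z.1 then (1:ℝ) else -1) * (z.1 - μ₁)) (ν₁.prod ν₂) := h12.add h3
  calc ∫ z : ℝ × ℝ, (max z.1 z.2 - (if z.2 ≤ z.1 then μ₁ else μ₂)) ∂(ν₁.prod ν₂)
      = ∫ z : ℝ × ℝ, ((z.1 - μ₁) + (z.2 - μ₂)
          + (if z.2 ≤ z.1 then (1:ℝ) else -1) * (z.1 - μ₁)
          - (if z.2 ≤ z.1 then (1:ℝ) else -1) * (z.2 - μ₂)) / 2 ∂(ν₁.prod ν₂) := by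
        simp only [hdecomp]
    _ = (∫ z : ℝ × ℝ, ((z.1 - μ₁) + (z.2 - μ₂)
          + (if z.2 ≤ z.1 then (1:ℝ) else -1) * (z.1 - μ₁)
          - (if z.2 ≤ z.1 then (1:ℝ) else -1) * (z.2 - μ₂)) ∂(ν₁.prod ν₂)) / 2 := by
        rw [integral_div]
    _ = (0 + 0 + 2 * v * P - (-(2 * v * P))) / 2 := by
        rw [integral_sub h123 h4, integral_add h12 h3, integral_add h1 h2, hA, hB, hC, hD]
    _ = 2 * v * P := by ring

end SelBias

/-- For independent `X₁ ~ N(μ₁, τ²)`, `X₂ ~ N(μ₂, τ²)` and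
`μ_Q = μ₁ 1{X₁ ≥ X₂} + μ₂ 1{X₂ > X₁}`, the expected selection bias
`E[max(X₁,X₂) − μ_Q]` equals `τ√2 φ((μ₁−μ₂)/(τ√2))`; over all mean pairs this bias
is maximized when the two means are equal, with maximum value `τ/√π`. -/
theorem expected_selection_bias {Ω : Type*} [MeasureSpace Ω]
    [IsProbabilityMeasure (ℙ : Measure Ω)] (X₁ X₂ : Ω → ℝ) (μ₁ μ₂ τ : ℝ) (hτ : 0 < τ)
    (hindep : IndepFun X₁ X₂ ℙ)
    (hX₁ : Measure.map X₁ ℙ = gaussianReal μ₁ (Real.toNNReal (τ ^ 2)))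
    (hX₂ : Measure.map X₂ ℙ = gaussianReal μ₂ (Real.toNNReal (τ ^ 2))) :
    (∫ ω, (max (X₁ ω) (X₂ ω) - (if X₂ ω ≤ X₁ ω then μ₁ else μ₂)))
        = τ * Real.sqrt 2 * stdNormalPDF ((μ₁ - μ₂) / (τ * Real.sqrt 2))
      ∧ (∀ m₁ m₂ : ℝ,
          τ * Real.sqrt 2 * stdNormalPDF ((m₁ - m₂) / (τ * Real.sqrt 2))
            ≤ τ * Real.sqrt 2 * stdNormalPDF ((m₁ - m₁) / (τ * Real.sqrt 2)))
      ∧ τ * Real.sqrt 2 * stdNormalPDF 0 = τ / Real.sqrt Real.pi := by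
  have hπ : (0:ℝ) < Real.pi := Real.pi_pos
  have hs2 : Real.sqrt 2 * Real.sqrt 2 = 2 := Real.mul_self_sqrt (by norm_num)
  have hsπ : Real.sqrt Real.pi * Real.sqrt Real.pi = Real.pi :=
    Real.mul_self_sqrt hπ.le
  have hs2pos : (0:ℝ) < Real.sqrt 2 := Real.sqrt_pos.mpr (by norm_num)
  have hsπpos : (0:ℝ) < Real.sqrt Real.pi := Real.sqrt_pos.mpr hπ
  refine ⟨?_, ?_, ?_⟩
  · -- main equality
    set v : ℝ≥0 := Real.toNNReal (τ ^ 2) with hvdef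
    have hv : v ≠ 0 := by
      simp only [hvdef, ne_eq, Real.toNNReal_eq_zero, not_le]
      positivity
    have hvr : ((v : ℝ≥0) : ℝ) = τ ^ 2 := Real.coe_toNNReal _ (by positivity)
    have hm1 : AEMeasurable X₁ ℙ := by
      by_contra h
      rw [Measure.map_of_not_aemeasurable h] at hX₁
      exact (IsProbabilityMeasure.ne_zero (gaussianReal μ₁ v)) hX₁.symm
    have hm2 : AEMeasurable X₂ ℙ := by
      by_contra h
      rw [Measure.map_of_not_aemeasurable h] at hX₂
      exact (IsProbabilityMeasure.ne_zero (gaussianReal μ₂ v)) hX₂.symm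
    have hmap : Measure.map (fun ω => (X₁ ω, X₂ ω)) ℙ
        = (gaussianReal μ₁ v).prod (gaussianReal μ₂ v) := by
      rw [← hX₁, ← hX₂]
      exact (indepFun_iff_map_prod_eq_prod_map_map hm1 hm2).mp hindep
    have hfm : Measurable (fun z : ℝ × ℝ => max z.1 z.2 - (if z.2 ≤ z.1 then μ₁ else μ₂)) :=
      (measurable_fst.max measurable_snd).sub
        (Measurable.ite (measurableSet_le measurable_snd measurable_fst)
          measurable_const measurable_const)
    have hstep : (∫ ω, (max (X₁ ω) (X₂ ω) - (if X₂ ω ≤ X₁ ω then μ₁ else μ₂)))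
        = ∫ z : ℝ × ℝ, (max z.1 z.2 - (if z.2 ≤ z.1 then μ₁ else μ₂))
            ∂((gaussianReal μ₁ v).prod (gaussianReal μ₂ v)) := by
      rw [← hmap, integral_map (hm1.prodMk hm2) hfm.aestronglyMeasurable]
    rw [hstep, SelBias.integral_prod_gaussian μ₁ μ₂ hv, hvr]
    have hexp : -((μ₁ - μ₂) / (τ * Real.sqrt 2)) ^ 2 / 2 = -(μ₁ - μ₂) ^ 2 / (4 * τ ^ 2) := by
      have h1 : ((μ₁ - μ₂) / (τ * Real.sqrt 2)) ^ 2 / 2 = (μ₁ - μ₂) ^ 2 / (4 * τ ^ 2) := by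
        rw [div_pow, mul_pow, show Real.sqrt 2 ^ 2 = (2:ℝ) from by rw [sq]; exact hs2, div_div]
        congr 1
        ring
      calc -((μ₁ - μ₂) / (τ * Real.sqrt 2)) ^ 2 / 2
          = -(((μ₁ - μ₂) / (τ * Real.sqrt 2)) ^ 2 / 2) := by ring
        _ = -((μ₁ - μ₂) ^ 2 / (4 * τ ^ 2)) := by rw [h1]
        _ = -(μ₁ - μ₂) ^ 2 / (4 * τ ^ 2) := by ring
    rw [stdNormalPDF, hexp]
    have hsq1 : Real.sqrt (Real.pi * τ ^ 2) = Real.sqrt Real.pi * τ := by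
      rw [Real.sqrt_mul hπ.le, Real.sqrt_sq hτ.le]
    have hsq2 : Real.sqrt (2 * Real.pi) = Real.sqrt 2 * Real.sqrt Real.pi :=
      Real.sqrt_mul (by norm_num) _
    rw [hsq1, hsq2]
    field_simp
    linear_combination hsπ
  · intro m₁ m₂
    have hnn : (0:ℝ) ≤ τ * Real.sqrt 2 := by positivity
    apply mul_le_mul_of_nonneg_left _ hnn
    simp only [stdNormalPDF, sub_self, zero_div]
    rw [show -(0:ℝ) ^ 2 / 2 = 0 by norm_num, Real.exp_zero]
    gcongr
    · exact Real.exp_le_one_iff.mpr (by nlinarith [sq_nonneg ((m₁ - m₂) / (τ * Real.sqrt 2))])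
  · rw [stdNormalPDF]
    rw [show -(0:ℝ) ^ 2 / 2 = 0 by norm_num, Real.exp_zero]
    rw [Real.sqrt_mul (by norm_num : (0:ℝ) ≤ 2)]
    rw [mul_one_div, div_eq_div_iff (mul_pos hs2pos hsπpos).ne' hsπpos.ne']
    ring
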